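/- Let k ≥ 2 and n ≥ 1 be integers and let ρ > 0 satisfy ρ ≤ 1/(2√n·(2√(2·ln(8k²)) + 3)). Then there is exactly one number α with 0 < α ≤ 1/2 satisfying the equation α = (2√(2·ln(2k²/α²)) + 3)·ρ·√n, and this α satisfies 3√n·ρ ≤ α ≤ min{1/2, ρ·√n·(2√(2·ln(2k²/(9·n·ρ²))) + 3)}. -/

import Mathlib

/-!
Write `φ_K(α) = 2√(2 ln(K/α²)) + 3` with `K = 2k²`, so the equation reads `α = φ_K(α)·c` with
`c = ρ√n`. The factor `φ_K` is at least `3`, continuous and antitone on `α > 0`. Hence every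
solution satisfies `α ≥ 3c`, and then antitonicity gives `α ≤ φ_K(3c)·c`, which is the upper bound
since `(3c)² = 9nρ²`. The hypothesis on `ρ` says exactly that `φ_K(1/2)·c ≤ 1/2`, so the
intermediate value theorem on `[3c, 1/2]` produces a solution, and antitonicity makes it unique.
-/

open Real Set Function

theorem AntitoneOn.eq_of_isFixedPt {α : Type*} [LinearOrder α] {f : α → α} {s : Set α}
    (hf : AntitoneOn f s) {x y : α} (hx : x ∈ s) (hy : y ∈ s)
    (hfx : IsFixedPt f x) (hfy : IsFixedPt f y) : x = y := by
  rcases le_total x y with hxy | hyx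
  · have := hf hx hy hxy
    rw [hfx, hfy] at this
    exact hxy.antisymm this
  · have := hf hy hx hyx
    rw [hfx, hfy] at this
    exact this.antisymm hyx

noncomputable def marginFactor (K α : ℝ) : ℝ := 2 * √(2 * log (K / α ^ 2)) + 3

lemma three_le_marginFactor (K α : ℝ) : 3 ≤ marginFactor K α :=
  le_add_of_nonneg_left (by positivity)

lemma marginFactor_antitoneOn {K : ℝ} (hK : 0 < K) : AntitoneOn (marginFactor K) (Ioi 0) := by
  intro x hx y hy hxy
  rw [mem_Ioi] at hx hy
  unfold marginFactor
  gcongr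

lemma marginFactor_continuousOn {K : ℝ} (hK : K ≠ 0) :
    ContinuousOn (marginFactor K) (Ioi 0) := by
  unfold marginFactor
  have hsq_ne (x : ℝ) (hx : x ∈ Ioi 0) : x ^ 2 ≠ 0 := pow_ne_zero 2 (ne_of_gt hx)
  refine (continuousOn_const.mul (ContinuousOn.sqrt (continuousOn_const.mul ?_))).add
    continuousOn_const
  exact (continuousOn_const.div (continuousOn_pow 2) hsq_ne).log
    fun x hx ↦ div_ne_zero hK (hsq_ne x hx)

section FixedPoint

variable {K c α : ℝ}

lemma three_mul_le_of_eq_marginFactor_mul (hc : 0 ≤ c) (hα : α = marginFactor K α * c) :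
    3 * c ≤ α :=
  hα ▸ mul_le_mul_of_nonneg_right (three_le_marginFactor K α) hc

lemma le_marginFactor_three_mul_mul (hK : 0 < K) (hc : 0 < c)
    (hα : α = marginFactor K α * c) : α ≤ marginFactor K (3 * c) * c := by
  have h3c : 3 * c ≤ α := three_mul_le_of_eq_marginFactor_mul hc.le hα
  have h3c_pos : 0 < 3 * c := by positivity
  calc α = marginFactor K α * c := hα
    _ ≤ marginFactor K (3 * c) * c := by
      gcongr
      exact marginFactor_antitoneOn hK h3c_pos (h3c_pos.trans_le h3c) h3c

lemma existsUnique_eq_marginFactor_mul {b : ℝ} (hK : 0 < K) (hc : 0 < c)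
    (hb : marginFactor K b * c ≤ b) :
    ∃! α : ℝ, (0 < α ∧ α ≤ b) ∧ α = marginFactor K α * c := by
  set f : ℝ → ℝ := fun α ↦ marginFactor K α * c
  have h3c_pos : 0 < 3 * c := by positivity
  have hIcc : Icc (3 * c) b ⊆ Ioi 0 := fun x hx ↦ h3c_pos.trans_le hx.1
  have hf_anti : AntitoneOn f (Ioi 0) := fun x hx y hy hxy ↦
    mul_le_mul_of_nonneg_right (marginFactor_antitoneOn hK hx hy hxy) hc.le
  have hf_cont : ContinuousOn f (Icc (3 * c) b) :=
    ((marginFactor_continuousOn hK.ne').mono hIcc).mul continuousOn_const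
  have hf_low : 3 * c ≤ f (3 * c) := mul_le_mul_of_nonneg_right (three_le_marginFactor _ _) hc.le
  have h3c_le : 3 * c ≤ b := (mul_le_mul_of_nonneg_right (three_le_marginFactor K b) hc.le).trans hb
  obtain ⟨α, hα, hfix⟩ := exists_mem_Icc_isFixedPt hf_cont h3c_le hf_low hb
  refine ⟨α, ⟨⟨hIcc hα, hα.2⟩, hfix.symm⟩, fun β ⟨⟨hβ, _⟩, hβfix⟩ ↦ ?_⟩
  exact hf_anti.eq_of_isFixedPt hβ (hIcc hα) hβfix.symm hfix

end FixedPoint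

theorem statement4 (k n : ℕ) (hk : 2 ≤ k) (hn : 1 ≤ n) (ρ : ℝ) (hρ : 0 < ρ)
    (hρle : ρ ≤ 1 / (2 * Real.sqrt n *
      (2 * Real.sqrt (2 * Real.log (8 * (k : ℝ)^2)) + 3))) :
    (∃! α : ℝ, (0 < α ∧ α ≤ 1/2) ∧
        α = (2 * Real.sqrt (2 * Real.log (2 * (k : ℝ)^2 / α^2)) + 3) * ρ * Real.sqrt n) ∧
    ∀ α : ℝ, (0 < α ∧ α ≤ 1/2) →
      α = (2 * Real.sqrt (2 * Real.log (2 * (k : ℝ)^2 / α^2)) + 3) * ρ * Real.sqrt n →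
      3 * Real.sqrt n * ρ ≤ α ∧
      α ≤ min (1/2)
        (ρ * Real.sqrt n *
          (2 * Real.sqrt (2 * Real.log (2 * (k : ℝ)^2 / (9 * (n : ℝ) * ρ^2))) + 3)) := by
  have hK : (0 : ℝ) < 2 * (k : ℝ) ^ 2 := by
    have : (2 : ℝ) ≤ k := by exact_mod_cast hk
    positivity
  have hc : 0 < ρ * √n := by
    have : (1 : ℝ) ≤ n := by exact_mod_cast hn
    positivity
  have hrhs (α : ℝ) : (2 * √(2 * log (2 * (k : ℝ) ^ 2 / α ^ 2)) + 3) * ρ * √n =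
      marginFactor (2 * k ^ 2) α * (ρ * √n) := mul_assoc _ _ _
  have hhalf : marginFactor (2 * k ^ 2) (1 / 2) * (ρ * √n) ≤ 1 / 2 := by
    have hφ : marginFactor (2 * k ^ 2) (1 / 2) = 2 * √(2 * log (8 * (k : ℝ) ^ 2)) + 3 := by
      rw [marginFactor, show 2 * (k : ℝ) ^ 2 / (1 / 2) ^ 2 = 8 * k ^ 2 by ring]
    rw [le_div_iff₀ (by positivity)] at hρle
    rw [hφ]
    linarith
  have h3c_sq : (3 * (ρ * √n)) ^ 2 = 9 * n * ρ ^ 2 := by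
    rw [mul_pow, mul_pow, sq_sqrt n.cast_nonneg]
    ring
  simp only [hrhs]
  refine ⟨existsUnique_eq_marginFactor_mul hK hc hhalf, fun α hα hfix ↦ ⟨?_, le_min hα.2 ?_⟩⟩
  · linarith [three_mul_le_of_eq_marginFactor_mul hc.le hfix]
  · calc α ≤ marginFactor (2 * k ^ 2) (3 * (ρ * √n)) * (ρ * √n) :=
          le_marginFactor_three_mul_mul hK hc hfix
      _ = _ := by rw [marginFactor, h3c_sq]; ring
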